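/- For odd n ≥ 3, SL(n,ℝ) is generated by the matrices diag(1, B) and diag(B, 1) with B ∈ SL(n-1,ℝ). -/

import Mathlib

/-!
An element of `SL(n, ℝ)` whose row and column at the first (resp. last) index are those of the
identity is of the form `diag(1, B)` (resp. `diag(B, 1)`). `SL(n, ℝ)` is generated by the
transvections `E_ij(c)` and the diagonal matrices `diag2n i j a` (`a` at `i`, `a⁻¹` at `j`), and
such a generator is of this form unless `{i, j} = {0, n - 1}`. In that case any `k ∉ {i, j}`
(which exists as `n ≥ 3`) gives `E_ij(c) = ⁅E_ik(c), E_kj(1)⁆` and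
`diag2n i j a = diag2n i k a * diag2n k j a`, and each factor misses an endpoint.
-/

open Matrix

/-- Elements of SL(n,ℝ) of the form diag(1, B), B ∈ SL(n-1,ℝ). -/
def genSet1 (n : ℕ) (h : 1 + (n - 1) = n) : Set (Matrix.SpecialLinearGroup (Fin n) ℝ) :=
  {g | ∃ B : Matrix (Fin (n - 1)) (Fin (n - 1)) ℝ, B.det = 1 ∧
    (g : Matrix (Fin n) (Fin n) ℝ) =
      Matrix.reindex (finSumFinEquiv.trans (finCongr h)) (finSumFinEquiv.trans (finCongr h))
        (Matrix.fromBlocks 1 0 0 B)}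

/-- Elements of SL(n,ℝ) of the form diag(B, 1), B ∈ SL(n-1,ℝ). -/
def genSet2 (n : ℕ) (h : (n - 1) + 1 = n) : Set (Matrix.SpecialLinearGroup (Fin n) ℝ) :=
  {g | ∃ B : Matrix (Fin (n - 1)) (Fin (n - 1)) ℝ, B.det = 1 ∧
    (g : Matrix (Fin n) (Fin n) ℝ) =
      Matrix.reindex (finSumFinEquiv.trans (finCongr h)) (finSumFinEquiv.trans (finCongr h))
        (Matrix.fromBlocks B 0 0 1)}

theorem reindex_fromBlocks_one_submatrix_inr {l m ι R : Type*} [DecidableEq l] [DecidableEq m]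
    [DecidableEq ι] [Zero R] [One R] (e : l ⊕ m ≃ ι) (M : Matrix ι ι R)
    (hrow : ∀ a k, M (e (.inl a)) k = (1 : Matrix ι ι R) (e (.inl a)) k)
    (hcol : ∀ a k, M k (e (.inl a)) = (1 : Matrix ι ι R) k (e (.inl a))) :
    reindex e e (fromBlocks 1 0 0 (M.submatrix (e ∘ .inr) (e ∘ .inr))) = M := by
  apply (reindex e.symm e.symm).injective
  ext (a | a) (b | b) <;> simp [hrow, hcol, one_apply]

theorem reindex_fromBlocks_submatrix_inl_one {l m ι R : Type*} [DecidableEq l] [DecidableEq m]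
    [DecidableEq ι] [Zero R] [One R] (e : l ⊕ m ≃ ι) (M : Matrix ι ι R)
    (hrow : ∀ a k, M (e (.inr a)) k = (1 : Matrix ι ι R) (e (.inr a)) k)
    (hcol : ∀ a k, M k (e (.inr a)) = (1 : Matrix ι ι R) k (e (.inr a))) :
    reindex e e (fromBlocks (M.submatrix (e ∘ .inl) (e ∘ .inl)) 0 0 1) = M := by
  apply (reindex e.symm e.symm).injective
  ext (a | a) (b | b) <;> simp [hrow, hcol, one_apply]

theorem mem_genSet1_of_row_col {n : ℕ} (h : 1 + (n - 1) = n) (g : SpecialLinearGroup (Fin n) ℝ)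
    {p : Fin n} (hp : p.val = 0) (hrow : ∀ k, g p k = (1 : Matrix (Fin n) (Fin n) ℝ) p k)
    (hcol : ∀ k, g k p = (1 : Matrix (Fin n) (Fin n) ℝ) k p) : g ∈ genSet1 n h := by
  set e := finSumFinEquiv.trans (finCongr h)
  have hep : ∀ a, e (.inl a) = p := fun a => Fin.ext (by simp [e, hp])
  have hg := reindex_fromBlocks_one_submatrix_inr e (g : Matrix (Fin n) (Fin n) ℝ)
    (fun a k => by rw [hep]; exact hrow k) (fun a k => by rw [hep]; exact hcol k)
  refine ⟨_, ?_, hg.symm⟩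
  have hdet := g.det_coe
  rwa [← hg, det_reindex_self, det_fromBlocks_zero₂₁, det_one, one_mul] at hdet

theorem mem_genSet2_of_row_col {n : ℕ} (h : n - 1 + 1 = n) (g : SpecialLinearGroup (Fin n) ℝ)
    {p : Fin n} (hp : p.val = n - 1) (hrow : ∀ k, g p k = (1 : Matrix (Fin n) (Fin n) ℝ) p k)
    (hcol : ∀ k, g k p = (1 : Matrix (Fin n) (Fin n) ℝ) k p) : g ∈ genSet2 n h := by
  set e := finSumFinEquiv.trans (finCongr h)
  have hep : ∀ a, e (.inr a) = p := fun a => Fin.ext (by simp [e, hp])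
  have hg := reindex_fromBlocks_submatrix_inl_one e (g : Matrix (Fin n) (Fin n) ℝ)
    (fun a k => by rw [hep]; exact hrow k) (fun a k => by rw [hep]; exact hcol k)
  refine ⟨_, ?_, hg.symm⟩
  have hdet := g.det_coe
  rwa [← hg, det_reindex_self, det_fromBlocks_zero₂₁, det_one, mul_one] at hdet

open scoped commutatorElement in
theorem commutator_transvection {ι F : Type*} [DecidableEq ι] [Fintype ι] [CommRing F]
    {i j k : ι} (hij : i ≠ j) (hik : i ≠ k) (hkj : k ≠ j) (a b : F) :
    ⁅SpecialLinearGroup.transvection hik a, SpecialLinearGroup.transvection hkj b⁆ =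
      SpecialLinearGroup.transvection hij (a * b) := by
  rw [commutatorElement_def, SpecialLinearGroup.transvection_inv,
    SpecialLinearGroup.transvection_inv]
  refine Subtype.ext ?_
  simp [SpecialLinearGroup.transvection_coe, mul_add, add_mul, single_mul_single_of_ne,
    hij.symm, hik.symm, hkj.symm, ← single_neg]
  abel

theorem diag2n_mul_diag2n {ι F : Type*} [DecidableEq ι] [Fintype ι] [Field F]
    {i j k : ι} (hij : i ≠ j) (hik : i ≠ k) (hkj : k ≠ j) (a : F) (ha : a ≠ 0) :
    SpecialLinearGroup.diag2n hik a ha * SpecialLinearGroup.diag2n hkj a ha =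
      SpecialLinearGroup.diag2n hij a ha := by
  refine Subtype.ext ?_
  change diagonal _ * diagonal _ = diagonal _
  rw [diagonal_mul_diagonal]
  congr 1
  funext x
  by_cases hxi : x = i <;> by_cases hxj : x = j <;> by_cases hxk : x = k <;> simp_all

section

variable {n : ℕ} (h₁ : 1 + (n - 1) = n) (h₂ : n - 1 + 1 = n)

theorem mem_closure_genSet_of_row_col (g : SpecialLinearGroup (Fin n) ℝ) {p : Fin n}
    (hp : p.val = 0 ∨ p.val = n - 1) (hrow : ∀ k, g p k = (1 : Matrix (Fin n) (Fin n) ℝ) p k)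
    (hcol : ∀ k, g k p = (1 : Matrix (Fin n) (Fin n) ℝ) k p) :
    g ∈ Subgroup.closure (genSet1 n h₁ ∪ genSet2 n h₂) :=
  Subgroup.subset_closure <| hp.imp (mem_genSet1_of_row_col h₁ g · hrow hcol)
    (mem_genSet2_of_row_col h₂ g · hrow hcol)

theorem transvection_mem_closure_genSet_of_ne {i j p : Fin n} (hij : i ≠ j) (c : ℝ)
    (hp : p.val = 0 ∨ p.val = n - 1) (hpi : p ≠ i) (hpj : p ≠ j) :
    SpecialLinearGroup.transvection hij c ∈ Subgroup.closure (genSet1 n h₁ ∪ genSet2 n h₂) := by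
  apply mem_closure_genSet_of_row_col h₁ h₂ _ hp <;> intro k <;>
    simp [SpecialLinearGroup.transvection_coe, hpi.symm, hpj.symm]

theorem diag2n_mem_closure_genSet_of_ne {i j p : Fin n} (hij : i ≠ j) {a : ℝ} (ha : a ≠ 0)
    (hp : p.val = 0 ∨ p.val = n - 1) (hpi : p ≠ i) (hpj : p ≠ j) :
    SpecialLinearGroup.diag2n hij a ha ∈ Subgroup.closure (genSet1 n h₁ ∪ genSet2 n h₂) := by
  apply mem_closure_genSet_of_row_col h₁ h₂ _ hp <;> intro k <;> by_cases hk : k = p <;>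
    simp [SpecialLinearGroup.diag2n_coe, one_apply, hpi, hpj, hk, eq_comm (a := p)]

theorem exists_endpoint_ne_or_endpoints {i j : Fin n} (hn : 3 ≤ n) :
    (∃ p : Fin n, (p.val = 0 ∨ p.val = n - 1) ∧ p ≠ i ∧ p ≠ j) ∨
      ((i.val = 0 ∨ i.val = n - 1) ∧ (j.val = 0 ∨ j.val = n - 1) ∧ ∃ k, i ≠ k ∧ k ≠ j) := by
  by_cases h : ∃ p : Fin n, (p.val = 0 ∨ p.val = n - 1) ∧ p ≠ i ∧ p ≠ j
  · exact .inl h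
  · push Not at h
    have h0 := h ⟨0, by omega⟩ (by simp)
    have h1 := h ⟨n - 1, by omega⟩ (by simp)
    refine .inr ⟨?_, ?_, ⟨1, by omega⟩, ?_, ?_⟩ <;> simp only [ne_eq, Fin.ext_iff] at * <;> omega

theorem transvection_mem_closure_genSet {i j : Fin n} (hn : 3 ≤ n) (hij : i ≠ j) (c : ℝ) :
    SpecialLinearGroup.transvection hij c ∈ Subgroup.closure (genSet1 n h₁ ∪ genSet2 n h₂) := by
  rcases exists_endpoint_ne_or_endpoints hn with ⟨p, hp, hpi, hpj⟩ | ⟨hi, hj, k, hik, hkj⟩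
  · exact transvection_mem_closure_genSet_of_ne h₁ h₂ hij c hp hpi hpj
  · rw [← mul_one c, ← commutator_transvection hij hik hkj]
    have hik_mem := transvection_mem_closure_genSet_of_ne h₁ h₂ hik c hj hij.symm hkj.symm
    have hkj_mem := transvection_mem_closure_genSet_of_ne h₁ h₂ hkj 1 hi hik hij
    rw [commutatorElement_def]
    exact mul_mem (mul_mem (mul_mem hik_mem hkj_mem) (inv_mem hik_mem)) (inv_mem hkj_mem)

theorem diag2n_mem_closure_genSet {i j : Fin n} (hn : 3 ≤ n) (hij : i ≠ j) {a : ℝ} (ha : a ≠ 0) :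
    SpecialLinearGroup.diag2n hij a ha ∈ Subgroup.closure (genSet1 n h₁ ∪ genSet2 n h₂) := by
  rcases exists_endpoint_ne_or_endpoints hn with ⟨p, hp, hpi, hpj⟩ | ⟨hi, hj, k, hik, hkj⟩
  · exact diag2n_mem_closure_genSet_of_ne h₁ h₂ hij ha hp hpi hpj
  · rw [← diag2n_mul_diag2n hij hik hkj]
    exact mul_mem (diag2n_mem_closure_genSet_of_ne h₁ h₂ hik ha hj hij.symm hkj.symm)
      (diag2n_mem_closure_genSet_of_ne h₁ h₂ hkj ha hi hik hij)

end

/-- For odd n ≥ 3, SL(n,ℝ) is generated by the matrices diag(1, B) and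
diag(B, 1) with B ∈ SL(n-1,ℝ). -/
theorem SL_generated (n : ℕ) (hn : 3 ≤ n) :
    Subgroup.closure (genSet1 n (by omega) ∪ genSet2 n (by omega)) = ⊤ := by
  have : Nontrivial (Fin n) := Fin.nontrivial_iff_two_le.mpr (by omega)
  refine eq_top_iff.mpr fun g _ => SpecialLinearGroup.diagonal_transvection_induction' _ g
    (fun _ _ hij _ hc => diag2n_mem_closure_genSet _ _ hn hij hc)
    (fun _ _ hij c => transvection_mem_closure_genSet _ _ hn hij c) (fun _ _ => mul_mem)
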